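/- arXiv:1703.02837 — 2 statements merged into one kernel-verified Lean document; each statement's English description precedes it below -/
import Mathlib

section
/- Termination of the approximation rewrite system: the priority rewrite system ⇒_AP consisting of the Refinement, Monadic, Shallow, and Linear transformations (with priority Refinement > Monadic > Shallow > Linear, and Refinement applied only finitely often) terminates: there is no infinite sequence N_0 ⇒_AP N_1 ⇒_AP N_2 ⇒_AP ⋯. -/
/- Common formalization of first-order clauses with straight dismatching
   constraints (SDC), following Teucke & Weidenbach,
   "Decidability of the Monadic Shallow Linear First-Order Fragment with
   Straight Dismatching Constraints". -/

set_option linter.unusedVariables false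

namespace SDCPaper

/-- A first-order signature: function symbols and predicate symbols.
    (Symbols are applied to argument lists; arities are not fixed.) -/
structure Sig : Type 1 where
  Func : Type
  Pred : Type

variable {S : Sig}

/-- First-order terms; variables are indexed by natural numbers. -/
inductive Term (S : Sig) : Type where
  | var : Nat → Term S
  | app : S.Func → List (Term S) → Term S

/-- Substitutions. -/
abbrev Subst (S : Sig) := Nat → Term S

/-- Applying a substitution to a term. -/
def Term.subst (σ : Subst S) : Term S → Term S
  | .var x => σ x
  | .app f ts => .app f (ts.attach.map fun t => Term.subst σ t.1)
  decreasing_by simp_wf; have := List.sizeOf_lt_of_mem t.2; omega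

/-- The list of (occurrences of) variables of a term. -/
def Term.varList : Term S → List Nat
  | .var x => [x]
  | .app _ ts => (ts.attach.map fun t => Term.varList t.1).flatten
  decreasing_by simp_wf; have := List.sizeOf_lt_of_mem t.2; omega

/-- Term depth: variables have depth 0, applications depth 1 + max of arguments. -/
def Term.depth : Term S → Nat
  | .var _ => 0
  | .app _ ts => ((ts.attach.map fun t => Term.depth t.1).foldr max 0) + 1
  decreasing_by simp_wf; have := List.sizeOf_lt_of_mem t.2; omega

/-- The subterm of `t` at a position (a sequence of argument indices), if any. -/
def Term.atPos : Term S → List Nat → Option (Term S)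
  | t, [] => some t
  | Term.var _, _ :: _ => none
  | Term.app _ ts, i :: r => (ts[i]?).bind fun u => Term.atPos u r
  termination_by t p => p.length

/-- `r` is a position of the term `t`. -/
inductive Term.HasPos : Term S → List Nat → Prop
  | nil (t : Term S) : Term.HasPos t []
  | cons (f : S.Func) (ts : List (Term S)) (i : Nat) (r : List Nat) (t : Term S) :
      ts[i]? = some t → Term.HasPos t r → Term.HasPos (.app f ts) (i :: r)

def Term.IsGround (t : Term S) : Prop := t.varList = []

def Term.Linear (t : Term S) : Prop := t.varList.Nodup

def Term.Shallow (t : Term S) : Prop := t.depth ≤ 1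

/-- A term is complex if it is not a variable. -/
def Term.IsComplex : Term S → Prop
  | .var _ => False
  | .app _ _ => True

/-- A term is straight if it is a variable, or a function applied to
    pairwise distinct variables except for at most one straight argument. -/
inductive Straight : Term S → Prop
  | var (x : Nat) : Straight (.var x)
  | allVars (f : S.Func) (ts : List (Term S)) :
      (∀ t ∈ ts, ∃ x, t = Term.var x) → ts.Nodup → Straight (.app f ts)
  | oneArg (f : S.Func) (ts₁ ts₂ : List (Term S)) (s : Term S) :
      Straight s →
      (∀ t ∈ ts₁ ++ ts₂, ∃ x, t = Term.var x) →
      (ts₁ ++ s :: ts₂).Nodup →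
      Straight (.app f (ts₁ ++ s :: ts₂))

/-- `s` is a strict subterm of `t`. -/
inductive StrictSubterm : Term S → Term S → Prop
  | arg (s : Term S) (f : S.Func) (ts : List (Term S)) :
      s ∈ ts → StrictSubterm s (.app f ts)
  | deep (s t : Term S) (f : S.Func) (ts : List (Term S)) :
      t ∈ ts → StrictSubterm s t → StrictSubterm s (.app f ts)

/-- Replacement of exactly one occurrence of the variable `x` by `x'`. -/
inductive ReplOne (x x' : Nat) : Term S → Term S → Prop
  | var : ReplOne x x' (.var x) (.var x')
  | app (f : S.Func) (ts₁ ts₂ : List (Term S)) (t t' : Term S) :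
      ReplOne x x' t t' →
      ReplOne x x' (.app f (ts₁ ++ t :: ts₂)) (.app f (ts₁ ++ t' :: ts₂))

/-- The function symbol `f` occurs in the term. -/
inductive FuncInTerm (f : S.Func) : Term S → Prop
  | head (ts : List (Term S)) : FuncInTerm f (.app f ts)
  | arg (g : S.Func) (ts : List (Term S)) (t : Term S) :
      t ∈ ts → FuncInTerm f t → FuncInTerm f (.app g ts)

/-- `t` is an instance of `s`. -/
def IsInstanceOf (t s : Term S) : Prop := ∃ σ : Subst S, t = s.subst σ

/-- The substitution `{x ↦ t}`. -/
def single (x : Nat) (t : Term S) : Subst S := fun y => if y = x then t else Term.var y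

def IsGroundSubst (δ : Subst S) : Prop := ∀ x, (δ x).IsGround

/-! ### Atoms, literals and clauses -/

/-- An atom: a predicate applied to a list of argument terms. -/
structure Atom (S : Sig) : Type where
  pred : S.Pred
  args : List (Term S)

def Atom.subst (σ : Subst S) (A : Atom S) : Atom S :=
  ⟨A.pred, A.args.map (Term.subst σ)⟩

def Atom.varList (A : Atom S) : List Nat := (A.args.map Term.varList).flatten

def Atom.IsGround (A : Atom S) : Prop := ∀ t ∈ A.args, t.IsGround

/-- A monadic atom has exactly one argument. -/
def Atom.Monadic (A : Atom S) : Prop := A.args.length = 1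

def Atom.HasPos (A : Atom S) (r : List Nat) : Prop :=
  r = [] ∨ ∃ i rr, r = i :: rr ∧ ∃ t, A.args[i]? = some t ∧ Term.HasPos t rr

/-- The argument subterm of an atom at a (non-empty) position. -/
def Atom.atPos (A : Atom S) : List Nat → Option (Term S)
  | [] => none
  | i :: r => (A.args[i]?).bind fun t => t.atPos r

def VarInAtom (x : Nat) (A : Atom S) : Prop := x ∈ A.varList

def IsVarAtom (A : Atom S) : Prop := ∃ x, A.args = [Term.var x]

/-- A clause `Γ → Δ`: multiset `ante` of negative atoms and multiset `succ`
    of positive atoms. -/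
structure Clause (S : Sig) : Type where
  ante : Multiset (Atom S)
  succ : Multiset (Atom S)

def Clause.subst (σ : Subst S) (C : Clause S) : Clause S :=
  ⟨C.ante.map (Atom.subst σ), C.succ.map (Atom.subst σ)⟩

def Clause.IsGround (C : Clause S) : Prop :=
  (∀ A ∈ C.ante, A.IsGround) ∧ (∀ A ∈ C.succ, A.IsGround)

/-- Equality of clauses modulo duplicate literal elimination. -/
def Clause.SameLits (C D : Clause S) : Prop :=
  (∀ A, A ∈ C.ante ↔ A ∈ D.ante) ∧ (∀ A, A ∈ C.succ ↔ A ∈ D.succ)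

/-- A literal: a sign (`true` = positive) together with an atom. -/
abbrev Lit (S : Sig) := Bool × Atom S

/-- The literals of a clause. -/
def Clause.lits (C : Clause S) : Multiset (Lit S) :=
  C.ante.map (fun A => (false, A)) + C.succ.map (fun A => (true, A))

def LitIn (L : Lit S) (C : Clause S) : Prop := L ∈ C.lits

/-! ### Straight dismatching constraints -/

/-- A straight dismatching constraint: either the trivially false constraint
    `⊥` or a conjunction of atomic constraints `t ≠ s` (pairs `(t, s)`). -/
inductive Constr (S : Sig) : Type where
  | bot : Constr S
  | conj : List (Term S × Term S) → Constr S

def Constr.and : Constr S → Constr S → Constr S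
  | .bot, _ => .bot
  | .conj _, .bot => .bot
  | .conj a, .conj b => .conj (a ++ b)

/-- Instantiation of a constraint: substitutions apply to left-hand sides. -/
def Constr.subst (σ : Subst S) : Constr S → Constr S
  | .bot => .bot
  | .conj cs => .conj (cs.map fun c => (c.1.subst σ, c.2))

/-- Depth of a constraint: maximal term depth of right-hand sides. -/
def Constr.depth : Constr S → Nat
  | .bot => 0
  | .conj cs => (cs.map fun c => c.2.depth).foldr max 0

/-- Well-formedness: right-hand sides straight, sides variable disjoint. -/
def Constr.WF : Constr S → Prop
  | .bot => True
  | .conj cs => ∀ c ∈ cs, Straight c.2 ∧ ∀ x ∈ c.1.varList, x ∉ c.2.varList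

def Constr.HasVar (x : Nat) : Constr S → Prop
  | .bot => False
  | .conj cs => ∃ c ∈ cs, x ∈ c.1.varList ∨ x ∈ c.2.varList

def Constr.HasFunc (f : S.Func) : Constr S → Prop
  | .bot => False
  | .conj cs => ∃ c ∈ cs, FuncInTerm f c.1 ∨ FuncInTerm f c.2

/-- `π'` contains a subset of the atomic constraints of `π`. -/
def Constr.Sub : Constr S → Constr S → Prop
  | .bot, .bot => True
  | .conj a, .conj b => ∀ c ∈ a, c ∈ b
  | _, _ => False

/-- A solution of a constraint: a grounding substitution making every
    left-hand side a non-instance of the corresponding right-hand side. -/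
def Solves (δ : Subst S) : Constr S → Prop
  | .bot => False
  | .conj cs => IsGroundSubst δ ∧ ∀ c ∈ cs, ¬ IsInstanceOf (c.1.subst δ) c.2

def Constr.Solvable (π : Constr S) : Prop := ∃ δ, Solves δ π

/-! ### Constraint normalization -/

/-- One step of the constraint normalization rewrite system. -/
inductive NormStep : Constr S → Constr S → Prop
  | funVar (pre post : List (Term S × Term S)) (f : S.Func) (ts : List (Term S)) (y : Nat) :
      NormStep (.conj (pre ++ (Term.app f ts, Term.var y) :: post)) .bot
  | funVars (pre post : List (Term S × Term S)) (f : S.Func) (ts ss : List (Term S)) :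
      (∀ s ∈ ss, ∃ x, s = Term.var x) → ss.Nodup → ts.length = ss.length →
      NormStep (.conj (pre ++ (Term.app f ts, Term.app f ss) :: post)) .bot
  | decomp (pre post : List (Term S × Term S)) (f : S.Func) (ts ss : List (Term S))
      (i : Nat) (hts : i < ts.length) (hss : i < ss.length) :
      ts.length = ss.length → (ss.get ⟨i, hss⟩).IsComplex →
      NormStep (.conj (pre ++ (Term.app f ts, Term.app f ss) :: post))
               (.conj (pre ++ (ts.get ⟨i, hts⟩, ss.get ⟨i, hss⟩) :: post))
  | clash (pre post : List (Term S × Term S)) (f g : S.Func) (ts ss : List (Term S)) :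
      f ≠ g →
      NormStep (.conj (pre ++ (Term.app f ts, Term.app g ss) :: post)) (.conj (pre ++ post))
  | subsume (pre mid post : List (Term S × Term S)) (x : Nat) (s : Term S) (σ : Subst S) :
      NormStep (.conj (pre ++ (Term.var x, s) :: mid ++ (Term.var x, Term.subst σ s) :: post))
               (.conj (pre ++ (Term.var x, s) :: mid ++ post))
  | subsume' (pre mid post : List (Term S × Term S)) (x : Nat) (s : Term S) (σ : Subst S) :
      NormStep (.conj (pre ++ (Term.var x, Term.subst σ s) :: mid ++ (Term.var x, s) :: post))
               (.conj (pre ++ (Term.var x, s) :: mid ++ post))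

def InNormalForm (π : Constr S) : Prop := ∀ π', ¬ NormStep π π'

/-- `π'` is the normal form of `π` under constraint normalization. -/
def IsNormOf (π' π : Constr S) : Prop :=
  Relation.ReflTransGen NormStep π π' ∧ InNormalForm π'

/-! ### Constrained clauses and Herbrand semantics -/

/-- A constrained clause `(C; π)`. -/
abbrev CClause (S : Sig) := Clause S × Constr S

def CClause.subst (σ : Subst S) (c : CClause S) : CClause S :=
  (c.1.subst σ, c.2.subst σ)

/-- The ground instances of a constrained clause. -/
def groundOf (c : CClause S) : Set (Clause S) :=
  {D | ∃ δ, Solves δ c.2 ∧ D = c.1.subst δ}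

/-- A Herbrand interpretation: a set of (ground) atoms. -/
abbrev HIntp (S : Sig) := Set (Atom S)

def SatGround (I : HIntp S) (C : Clause S) : Prop :=
  (∃ A ∈ C.succ, A ∈ I) ∨ (∃ A ∈ C.ante, A ∉ I)

def SatCC (I : HIntp S) (c : CClause S) : Prop := ∀ D ∈ groundOf c, SatGround I D

def SatSet (I : HIntp S) (N : Set (CClause S)) : Prop := ∀ c ∈ N, SatCC I c

def Satisfiable (N : Set (CClause S)) : Prop := ∃ I, SatSet I N

def groundN (N : Set (CClause S)) : Set (Clause S) := {D | ∃ c ∈ N, D ∈ groundOf c}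

def CClause.HasVar (x : Nat) (c : CClause S) : Prop :=
  (∃ A ∈ c.1.ante, VarInAtom x A) ∨ (∃ A ∈ c.1.succ, VarInAtom x A) ∨ c.2.HasVar x

def Atom.HasFunc (f : S.Func) (A : Atom S) : Prop := ∃ t ∈ A.args, FuncInTerm f t

def CClause.HasFunc (f : S.Func) (c : CClause S) : Prop :=
  (∃ A ∈ c.1.ante, A.HasFunc f) ∨ (∃ A ∈ c.1.succ, A.HasFunc f) ∨ c.2.HasFunc f

def CClause.HasPred (P : S.Pred) (c : CClause S) : Prop :=
  (∃ A ∈ c.1.ante, A.pred = P) ∨ (∃ A ∈ c.1.succ, A.pred = P)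

def PredInSet (P : S.Pred) (N : Set (CClause S)) : Prop := ∃ c ∈ N, c.HasPred P

def FuncInSet (f : S.Func) (N : Set (CClause S)) : Prop := ∃ c ∈ N, c.HasFunc f

/-- Equality of constraints modulo duplicate atomic constraints. -/
def Constr.SameAtoms : Constr S → Constr S → Prop
  | .bot, .bot => True
  | .conj a, .conj b => ∀ p, p ∈ a ↔ p ∈ b
  | _, _ => False

/-- Equality of constrained clauses modulo duplicate literal elimination. -/
def CClause.EqModDup (c d : CClause S) : Prop :=
  c.1.SameLits d.1 ∧ Constr.SameAtoms c.2 d.2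

/-- `D` is a ground instance of `(C;π)` modulo duplicate literal elimination. -/
def GroundInstanceModDup (D : Clause S) (c : CClause S) : Prop :=
  ∃ δ, Solves δ c.2 ∧ Clause.SameLits D (c.1.subst δ)

/-- `c` is an instance of `c'` (modulo duplicate literal elimination). -/
def InstanceOfCCModDup (c c' : CClause S) : Prop :=
  ∀ D ∈ groundOf c, ∃ D' ∈ groundOf c', Clause.SameLits D D'

/-! ### Unification -/

def IsUnifier (σ : Subst S) (A B : Atom S) : Prop := A.subst σ = B.subst σ

/-- `σ` is a most general unifier of atoms `A` and `B`. -/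
def IsMGU (σ : Subst S) (A B : Atom S) : Prop :=
  IsUnifier σ A B ∧
  ∀ τ : Subst S, IsUnifier τ A B → ∃ ρ : Subst S, ∀ x, τ x = (σ x).subst ρ

/-! ### Orderings -/

/-- Dershowitz-Manna multiset extension (strict). -/
def MulLT {α : Type} (r : α → α → Prop) (M N : Multiset α) : Prop :=
  ∃ X Y Z, N = Z + X ∧ M = Z + Y ∧ X ≠ 0 ∧ ∀ y ∈ Y, ∃ x ∈ X, r y x

/-- Multiset encoding of literals: `A ↦ {A}`, `¬A ↦ {A, A}`. -/
def litMS : Lit S → Multiset (Atom S)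
  | (true, A) => {A}
  | (false, A) => {A, A}

/-- The literal ordering induced by an atom ordering. -/
def LitLT (r : Atom S → Atom S → Prop) (L L' : Lit S) : Prop :=
  MulLT r (litMS L) (litMS L')

def LitLE (r : Atom S → Atom S → Prop) (L L' : Lit S) : Prop :=
  LitLT r L L' ∨ L = L'

/-- The clause ordering: multiset extension of the literal ordering. -/
def ClauseLT (r : Atom S → Atom S → Prop) (C D : Clause S) : Prop :=
  MulLT (LitLT r) C.lits D.lits

/-- An atom ordering: irreflexive, transitive, total on ground atoms,
    and well-founded. -/
structure AtomOrder (S : Sig) : Type 1 where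
  lt : Atom S → Atom S → Prop
  irrefl : ∀ A, ¬ lt A A
  trans : ∀ A B C, lt A B → lt B C → lt A C
  total : ∀ A B, A.IsGround → B.IsGround → lt A B ∨ lt B A ∨ A = B
  wf : WellFounded lt

/-- The ordering condition of Section 3: a literal `¬Q(s)` is never greater
    than a literal `P(t[s]ₚ)` for `p ≠ ε`. -/
def SelOrderCond (ord : AtomOrder S) : Prop :=
  ∀ (P Q : S.Pred) (s t : Term S), StrictSubterm s t →
    ¬ LitLT ord.lt ((true, ⟨P, [t]⟩) : Lit S) ((false, ⟨Q, [s]⟩) : Lit S)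

/-! ### Selection and the inference rules -/

def VarInSucc (x : Nat) (C : Clause S) : Prop := ∃ A ∈ C.succ, VarInAtom x A

/-- The superposition selection function `sel` (Definition 2). -/
def Selected (C : Clause S) (A : Atom S) : Prop :=
  A ∈ C.ante ∧
  ( (¬ IsVarAtom A)
    ∨ ((∀ B ∈ C.ante, IsVarAtom B) ∧ ∃ x, A.args = [Term.var x] ∧ ¬ VarInSucc x C)
    ∨ ((∀ B ∈ C.ante, ∃ y, B.args = [Term.var y] ∧ VarInSucc y C) ∧
       (∃ x, A.args = [Term.var x] ∧ ∃ B ∈ C.succ, B.args = [Term.var x])) )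

def NoSel (C : Clause S) : Prop := ∀ A, ¬ Selected C A

/-- `A` is strictly maximal w.r.t. the remaining clause `rest` under
    constraint `π` (Definition 3). -/
def StrictlyMaxIn (r : Atom S → Atom S → Prop) (A : Atom S) (rest : Clause S) (π : Constr S) : Prop :=
  ∃ δ, Solves δ π ∧ ∀ L ∈ (rest.subst δ).lits, LitLT r L (true, A.subst δ)

def MaxIn (r : Atom S → Atom S → Prop) (A : Atom S) (rest : Clause S) (π : Constr S) : Prop :=
  ∃ δ, Solves δ π ∧ ∀ L ∈ (rest.subst δ).lits, LitLE r L (true, A.subst δ)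

def MaxNegIn (r : Atom S → Atom S → Prop) (B : Atom S) (rest : Clause S) (π : Constr S) : Prop :=
  ∃ δ, Solves δ π ∧ ∀ L ∈ (rest.subst δ).lits, LitLE r L (false, B.subst δ)

/-- SDC-Resolution (Definition 4). -/
def IsResolvent (r : Atom S → Atom S → Prop) (p1 p2 concl : CClause S) : Prop :=
  ∃ (Γ₁ Δ₁ Γ₂ Δ₂ : Multiset (Atom S)) (A B : Atom S) (π₁ π₂ π : Constr S) (σ : Subst S),
    p1 = (⟨Γ₁, A ::ₘ Δ₁⟩, π₁) ∧
    p2 = (⟨B ::ₘ Γ₂, Δ₂⟩, π₂) ∧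
    IsMGU σ A B ∧
    IsNormOf π ((π₁.and π₂).subst σ) ∧
    π.Solvable ∧
    StrictlyMaxIn r (A.subst σ) (Clause.subst σ ⟨Γ₁, Δ₁⟩) (π₁.subst σ) ∧
    NoSel ⟨Γ₁, A ::ₘ Δ₁⟩ ∧
    (Selected ⟨B ::ₘ Γ₂, Δ₂⟩ B ∨
      (NoSel ⟨B ::ₘ Γ₂, Δ₂⟩ ∧ MaxNegIn r (B.subst σ) (Clause.subst σ ⟨Γ₂, Δ₂⟩) (π₂.subst σ))) ∧
    concl = (Clause.subst σ ⟨Γ₁ + Γ₂, Δ₁ + Δ₂⟩, π)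

/-- SDC-Factoring (Definition 5). -/
def IsFactor (r : Atom S → Atom S → Prop) (p concl : CClause S) : Prop :=
  ∃ (Γ Δ : Multiset (Atom S)) (A B : Atom S) (π π' : Constr S) (σ : Subst S),
    p = (⟨Γ, A ::ₘ B ::ₘ Δ⟩, π) ∧
    IsMGU σ A B ∧
    NoSel ⟨Γ, A ::ₘ B ::ₘ Δ⟩ ∧
    MaxIn r (A.subst σ) (Clause.subst σ ⟨Γ, B ::ₘ Δ⟩) (π.subst σ) ∧
    IsNormOf π' (π.subst σ) ∧
    π'.Solvable ∧
    concl = (Clause.subst σ ⟨Γ, A ::ₘ Δ⟩, π')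

/-- Redundancy of a constrained clause in a clause set. -/
def RedundantIn (r : Atom S → Atom S → Prop) (c : CClause S) (N : Set (CClause S)) : Prop :=
  ∀ D ∈ groundOf c, ∃ L : List (Clause S),
    (∀ D' ∈ L, D' ∈ groundN N ∧ ClauseLT r D' D) ∧
    ∀ I : HIntp S, (∀ D' ∈ L, SatGround I D') → SatGround I D

/-- Saturation up to redundancy (Definition 7). -/
def SaturatedUR (r : Atom S → Atom S → Prop) (N : Set (CClause S)) : Prop :=
  (∀ p1 ∈ N, ∀ p2 ∈ N, ∀ c, IsResolvent r p1 p2 c →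
     RedundantIn r c N ∨ groundOf c ⊆ groundN N) ∧
  (∀ p ∈ N, ∀ c, IsFactor r p c → RedundantIn r c N ∨ groundOf c ⊆ groundN N)

/-! ### Partial minimal model construction (Definition 9) -/

def ProducedAtoms (r : Atom S → Atom S → Prop) (G : Set (Clause S))
    (prod : Clause S → Set (Atom S)) (D : Clause S) : HIntp S :=
  {A | ∃ D' ∈ G, ClauseLT r D' D ∧ A ∈ prod D'}

/-- `prod` assigns to each ground clause its produced atoms according to the
    superposition partial model construction. -/
def IsModelConstruction (r : Atom S → Atom S → Prop) (G : Set (Clause S))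
    (prod : Clause S → Set (Atom S)) : Prop :=
  (∀ D, D ∉ G → prod D = ∅) ∧
  ∀ D ∈ G, prod D =
    {A | ∃ Δ, D.succ = A ::ₘ Δ ∧
      (∀ L ∈ (Clause.lits ⟨D.ante, Δ⟩), LitLT r L (true, A)) ∧
      NoSel D ∧ ¬ SatGround (ProducedAtoms r G prod D) D}

def ConstructedModel (G : Set (Clause S)) (prod : Clause S → Set (Atom S)) : HIntp S :=
  {A | ∃ D ∈ G, A ∈ prod D}

/-! ### The MSL(SDC) fragment -/

/-- MSL clauses: monadic predicates, positive literals shallow and linear,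
    positive atoms pairwise variable disjoint (no equations occur,
    since atoms are predicate atoms). -/
def IsMSL (C : Clause S) : Prop :=
  (∀ A ∈ C.ante, A.Monadic) ∧ (∀ A ∈ C.succ, A.Monadic) ∧
  (∀ A ∈ C.succ, ∀ t ∈ A.args, t.depth ≤ 1) ∧
  Multiset.Nodup ((C.succ.map (fun A => (A.varList : Multiset Nat))).sum)

def IsMSLSDC (c : CClause S) : Prop := IsMSL c.1 ∧ c.2.WF

/-! ### Condensation -/

/-- `(C';π')` is a condensation of `(C;π)`. -/
def Condensation (c' c : CClause S) : Prop :=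
  (c'.1.ante ≤ c.1.ante ∧ c'.1.succ ≤ c.1.succ ∧ c'.1 ≠ c.1) ∧
  ∃ σ : Subst S,
    c.2.subst σ = c'.2 ∧ Constr.Sub c'.2 c.2 ∧
    (∀ A ∈ c.1.ante, ∃ A' ∈ c'.1.ante, A.subst σ = A') ∧
    (∀ A ∈ c.1.succ, ∃ A' ∈ c'.1.succ, A.subst σ = A')

/-! ### The approximation transformations -/

open Classical in
/-- Monadic projection of an atom: `P(t⃗) ↦ T(f_P(t⃗))`. -/
noncomputable def projAtom (P T : S.Pred) (fP : S.Func) (A : Atom S) : Atom S :=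
  if A.pred = P then ⟨T, [Term.app fP A.args]⟩ else A

noncomputable def projClause (P T : S.Pred) (fP : S.Func) (C : Clause S) : Clause S :=
  ⟨C.ante.map (projAtom P T fP), C.succ.map (projAtom P T fP)⟩

noncomputable def projCC (P T : S.Pred) (fP : S.Func) (c : CClause S) : CClause S :=
  (projClause P T fP c.1, c.2)

/-- The Monadic transformation step. -/
def MonadicStep (P T : S.Pred) (fP : S.Func) (N N' : Set (CClause S)) : Prop :=
  P ≠ T ∧
  (∃ c ∈ N, ∃ A ∈ c.1.ante + c.1.succ, A.pred = P ∧ ¬ A.Monadic) ∧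
  ¬ PredInSet T N ∧ ¬ FuncInSet fP N ∧
  N' = projCC P T fP '' N

/-- The term `f(t⃗₁, s, t⃗₂)` in which `s` occurs at depth one. -/
def shETerm (f : S.Func) (ts₁ ts₂ : List (Term S)) (s : Term S) : Term S :=
  .app f (ts₁ ++ s :: ts₂)

/-- The atom `E[s]ₚ` with `|p| = 2`. -/
def shEAtom (Pr : S.Pred) (as₁ as₂ : List (Term S)) (f : S.Func)
    (ts₁ ts₂ : List (Term S)) (s : Term S) : Atom S :=
  ⟨Pr, as₁ ++ shETerm f ts₁ ts₂ s :: as₂⟩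

/-- The clause `(Γ → E[s]ₚ, Δ; π)`. -/
def shSrc (Γ Δ : Multiset (Atom S)) (π : Constr S) (Pr : S.Pred)
    (as₁ as₂ ts₁ ts₂ : List (Term S)) (f : S.Func) (s : Term S) : CClause S :=
  (⟨Γ, shEAtom Pr as₁ as₂ f ts₁ ts₂ s ::ₘ Δ⟩, π)

/-- The left result `(S(x), Γₗ → E[p/x], Δₗ; π)` of the Shallow transformation. -/
def shLeft (Γl Δl : Multiset (Atom S)) (π : Constr S) (Pr : S.Pred)
    (as₁ as₂ ts₁ ts₂ : List (Term S)) (f : S.Func) (Sp : S.Pred) (x : Nat) : CClause S :=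
  (⟨(⟨Sp, [Term.var x]⟩ : Atom S) ::ₘ Γl,
    shEAtom Pr as₁ as₂ f ts₁ ts₂ (Term.var x) ::ₘ Δl⟩, π)

/-- The right result `(Γᵣ → S(s), Δᵣ; π)` of the Shallow transformation. -/
def shRight (Γr Δr : Multiset (Atom S)) (π : Constr S) (s : Term S) (Sp : S.Pred) : CClause S :=
  (⟨Γr, (⟨Sp, [s]⟩ : Atom S) ::ₘ Δr⟩, π)

/-- Side conditions of the Shallow transformation. -/
def ShallowCond (N : Set (CClause S)) (Γ Δ Γl Γr Δl Δr : Multiset (Atom S)) (π : Constr S)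
    (Pr : S.Pred) (as₁ as₂ ts₁ ts₂ : List (Term S)) (f : S.Func) (s : Term S)
    (Sp : S.Pred) (x : Nat) : Prop :=
  s.IsComplex ∧
  ¬ PredInSet Sp N ∧
  ¬ (shSrc Γ Δ π Pr as₁ as₂ ts₁ ts₂ f s).HasVar x ∧
  Γl.map (Atom.subst (single x s)) + Γr = Γ ∧
  Δl + Δr = Δ ∧
  (∀ (Q : S.Pred) (y : Nat), (⟨Q, [Term.var y]⟩ : Atom S) ∈ Γ →
     (VarInAtom y (shEAtom Pr as₁ as₂ f ts₁ ts₂ (Term.var x)) ∨ ∃ B ∈ Δl, VarInAtom y B) →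
     (⟨Q, [Term.var y]⟩ : Atom S) ∈ Γl) ∧
  (∀ (Q : S.Pred) (y : Nat), (⟨Q, [Term.var y]⟩ : Atom S) ∈ Γ →
     (y ∈ s.varList ∨ ∃ B ∈ Δr, VarInAtom y B) →
     (⟨Q, [Term.var y]⟩ : Atom S) ∈ Γr)

/-- Replacement of one occurrence of variable `x` by `x'` in an atom. -/
def ReplOneAtom (x x' : Nat) (A A' : Atom S) : Prop :=
  ∃ (P : S.Pred) (as₁ as₂ : List (Term S)) (t t' : Term S),
    A = ⟨P, as₁ ++ t :: as₂⟩ ∧ A' = ⟨P, as₁ ++ t' :: as₂⟩ ∧ ReplOne x x' t t'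

/-- The clause `(Γ → E, Δ; π)` transformed by the Linear transformation. -/
def liSrc (Γ Δ : Multiset (Atom S)) (π : Constr S) (E : Atom S) : CClause S :=
  (⟨Γ, E ::ₘ Δ⟩, π)

/-- The result `(Γσ, Γ → E', Δ; π ∧ πσ)` of the Linear transformation,
    `σ = {x ↦ x'}`. -/
def liRes (Γ Δ : Multiset (Atom S)) (π : Constr S) (E' : Atom S) (x x' : Nat) : CClause S :=
  (⟨Γ.map (Atom.subst (single x (Term.var x'))) + Γ, E' ::ₘ Δ⟩,
   π.and (π.subst (single x (Term.var x'))))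

/-- Side conditions of the Linear transformations (both variants): one
    occurrence of the repeated succedent variable `x` is replaced by fresh `x'`. -/
def LinearCond (Γ Δ : Multiset (Atom S)) (π : Constr S) (E E' : Atom S) (x x' : Nat) : Prop :=
  ReplOneAtom x x' E E' ∧
  ¬ (liSrc Γ Δ π E).HasVar x' ∧
  (VarInAtom x E' ∨ ∃ A ∈ Δ, VarInAtom x A)

/-- The first result `(C; π ∧ x ≠ t)` of the Refinement transformation. -/
def refLeft (c : CClause S) (x : Nat) (t : Term S) : CClause S :=
  (c.1, c.2.and (.conj [(Term.var x, t)]))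

/-- The second result `(C;π){x ↦ t}` of the Refinement transformation. -/
def refRight (c : CClause S) (x : Nat) (t : Term S) : CClause S :=
  CClause.subst (single x t) c

/-- Side conditions of the Refinement transformation. -/
def RefineClause (c : CClause S) (x : Nat) (t : Term S) : Prop :=
  ((∃ A ∈ c.1.ante, VarInAtom x A) ∨ ∃ A ∈ c.1.succ, VarInAtom x A) ∧
  Straight t ∧
  (∀ y ∈ t.varList, ¬ c.HasVar y)

/-- The data of a single approximation transformation step. -/
inductive StepData (S : Sig) : Type 1 where
  | mo (P T : S.Pred) (fP : S.Func)
  | sh (Γ Δ : Multiset (Atom S)) (π : Constr S) (Pr : S.Pred)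
       (as₁ as₂ ts₁ ts₂ : List (Term S)) (f : S.Func) (s : Term S)
       (Sp : S.Pred) (x : Nat) (Γl Γr Δl Δr : Multiset (Atom S))
  | li (Γ Δ : Multiset (Atom S)) (π : Constr S) (E E' : Atom S) (x x' : Nat)
  | ref (c : CClause S) (x : Nat) (t : Term S)

/-- One step of the approximation rewrite system `⇒_AP` on clause sets,
    labelled with its data. -/
inductive DStep : Set (CClause S) → StepData S → Set (CClause S) → Prop
  | mo (N N' : Set (CClause S)) (P T : S.Pred) (fP : S.Func) :
      MonadicStep P T fP N N' → DStep N (.mo P T fP) N'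
  | sh (M : Set (CClause S)) (Γ Δ Γl Γr Δl Δr : Multiset (Atom S)) (π : Constr S)
      (Pr : S.Pred) (as₁ as₂ ts₁ ts₂ : List (Term S)) (f : S.Func) (s : Term S)
      (Sp : S.Pred) (x : Nat) :
      shSrc Γ Δ π Pr as₁ as₂ ts₁ ts₂ f s ∉ M →
      ShallowCond (insert (shSrc Γ Δ π Pr as₁ as₂ ts₁ ts₂ f s) M)
        Γ Δ Γl Γr Δl Δr π Pr as₁ as₂ ts₁ ts₂ f s Sp x →
      DStep (insert (shSrc Γ Δ π Pr as₁ as₂ ts₁ ts₂ f s) M)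
        (.sh Γ Δ π Pr as₁ as₂ ts₁ ts₂ f s Sp x Γl Γr Δl Δr)
        (insert (shLeft Γl Δl π Pr as₁ as₂ ts₁ ts₂ f Sp x)
          (insert (shRight Γr Δr π s Sp) M))
  | li (M : Set (CClause S)) (Γ Δ : Multiset (Atom S)) (π : Constr S)
      (E E' : Atom S) (x x' : Nat) :
      liSrc Γ Δ π E ∉ M → LinearCond Γ Δ π E E' x x' →
      DStep (insert (liSrc Γ Δ π E) M) (.li Γ Δ π E E' x x')
        (insert (liRes Γ Δ π E' x x') M)
  | ref (M : Set (CClause S)) (c : CClause S) (x : Nat) (t : Term S) :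
      c ∉ M → RefineClause c x t →
      DStep (insert c M) (.ref c x t)
        (insert (refLeft c x t) (insert (refRight c x t) M))

/-- Priority class of a rule: Refinement 0 > Monadic 1 > Shallow 2 > Linear 3. -/
def StepData.rule : StepData S → Nat
  | .ref _ _ _ => 0
  | .mo _ _ _ => 1
  | .sh _ _ _ _ _ _ _ _ _ _ _ _ _ _ _ _ => 2
  | .li _ _ _ _ _ _ _ => 3

def RuleApplicable (k : Nat) (N : Set (CClause S)) : Prop :=
  ∃ d N', DStep N d N' ∧ StepData.rule d = k

/-- A `⇒_AP` step respecting the rule priorities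
    Refinement > Monadic > Shallow > Linear. -/
def APStepPrio (N : Set (CClause S)) (d : StepData S) (N' : Set (CClause S)) : Prop :=
  DStep N d N' ∧
  (d.rule = 2 → ¬ RuleApplicable 1 N) ∧
  (d.rule = 3 → ¬ RuleApplicable 1 N ∧ ¬ RuleApplicable 2 N)

/-- A finite sequence of approximation steps. -/
inductive DChain : Set (CClause S) → List (StepData S) → Set (CClause S) → Prop
  | nil (N : Set (CClause S)) : DChain N [] N
  | cons {N N' N'' : Set (CClause S)} (d : StepData S) (ls : List (StepData S)) :
      DStep N d N' → DChain N' ls N'' → DChain N (d :: ls) N''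

/-- Reverse monadic projection of an interpretation along an approximation
    sequence: each encoded atom `T(f_P(t⃗))` is replaced back by `P(t⃗)`. -/
noncomputable def revProj : List (StepData S) → HIntp S → HIntp S
  | [], I => I
  | (StepData.mo P T fP) :: ls, I => projAtom P T fP ⁻¹' (revProj ls I)
  | _ :: ls, I => revProj ls I

/-! ### Conflicting cores -/

/-- A (complete) ground conflicting core of a clause set `N`. -/
def IsGroundConflCore (Nb : Set (Clause S)) (N : Set (CClause S)) : Prop :=
  Nb.Finite ∧ (∀ D ∈ Nb, D.IsGround) ∧
  (¬ ∃ I : HIntp S, ∀ D ∈ Nb, SatGround I D) ∧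
  (∀ D ∈ Nb, ∃ c ∈ N, GroundInstanceModDup D c)

def CompleteCore (Nb : Set (Clause S)) : Prop :=
  (∀ D ∈ Nb, ∀ A ∈ D.ante, ∃ D' ∈ Nb, A ∈ D'.succ) ∧
  (∀ D ∈ Nb, ∀ A ∈ D.succ, ∃ D' ∈ Nb, A ∈ D'.ante)

/-- A conflicting core `(N^⊥; π)` of a constrained clause set (Definition 15). -/
def IsConflictingCore (Nb : Set (Clause S)) (π : Constr S) (N : Set (CClause S)) : Prop :=
  Nb.Finite ∧ π.Solvable ∧
  (∀ δ, Solves δ π → ¬ ∃ I : HIntp S, ∀ D ∈ Nb, SatGround I (D.subst δ)) ∧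
  (∀ D ∈ Nb, ∃ c ∈ N, InstanceOfCCModDup (D, π) c)

/-- Lift-conflicts (Definition 17). -/
def IsLiftConflict (d : StepData S) (Nb : Set (Clause S)) (Cc : Clause S) : Prop :=
  match d with
  | .li Γ Δ π E E' x x' =>
      Cc ∈ Nb ∧ GroundInstanceModDup Cc (liRes Γ Δ π E' x x') ∧
      ¬ GroundInstanceModDup Cc (liSrc Γ Δ π E)
  | .sh Γ Δ π Pr as₁ as₂ ts₁ ts₂ f s Sp x Γl Γr Δl Δr =>
      (∃ δl δr : Subst S, Solves δl π ∧ Solves δr π ∧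
         Clause.subst δl (shLeft Γl Δl π Pr as₁ as₂ ts₁ ts₂ f Sp x).1 ∈ Nb ∧
         Clause.subst δr (shRight Γr Δr π s Sp).1 ∈ Nb ∧
         δl x = s.subst δr ∧
         Cc = ⟨Γl.map (Atom.subst δl) + Γr.map (Atom.subst δr),
               Atom.subst δl (shEAtom Pr as₁ as₂ f ts₁ ts₂ (Term.var x)) ::ₘ
                 (Δl.map (Atom.subst δl) + Δr.map (Atom.subst δr))⟩) ∧
      ¬ GroundInstanceModDup Cc (shSrc Γ Δ π Pr as₁ as₂ ts₁ ts₂ f s)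
  | _ => False

/-! ### Parent and ancestor relations -/

/-- The clause is not the one transformed by the step. -/
def UnchangedBy : StepData S → CClause S → Prop
  | .mo _ _ _, _ => False
  | .sh Γ Δ π Pr as₁ as₂ ts₁ ts₂ f s _ _ _ _ _ _, c =>
      c ≠ shSrc Γ Δ π Pr as₁ as₂ ts₁ ts₂ f s
  | .li Γ Δ π E _ _ _, c => c ≠ liSrc Γ Δ π E
  | .ref c0 _ _, c => c ≠ c0

/-- The parent clause relation (Definition 12, without shallow resolvents). -/
def PCrel (d : StepData S) (c c' : CClause S) : Prop :=
  (UnchangedBy d c ∧ c' = c) ∨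
  match d with
  | .mo P T fP => c' = projCC P T fP c
  | .sh Γ Δ π Pr as₁ as₂ ts₁ ts₂ f s Sp x Γl Γr Δl Δr =>
      c = shSrc Γ Δ π Pr as₁ as₂ ts₁ ts₂ f s ∧
      (c' = shLeft Γl Δl π Pr as₁ as₂ ts₁ ts₂ f Sp x ∨ c' = shRight Γr Δr π s Sp)
  | .li Γ Δ π E E' x x' => c = liSrc Γ Δ π E ∧ c' = liRes Γ Δ π E' x x'
  | .ref c0 x t => c = c0 ∧ (c' = refLeft c0 x t ∨ c' = refRight c0 x t)

/-- The parent variable relation (Definition 13). -/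
def PV (d : StepData S) (c : CClause S) (x : Nat) (c' : CClause S) (y : Nat) : Prop :=
  (PCrel d c c' ∧ c.HasVar x ∧ c'.HasVar x ∧ y = x) ∨
  (match d with
   | .li Γ Δ π E E' x0 x0' =>
       c = liSrc Γ Δ π E ∧ c' = liRes Γ Δ π E' x0 x0' ∧ x = x0 ∧ y = x0'
   | _ => False)

/-- The parent literal position relation (Definition 14). A literal position
    is a pair of a literal and a position within it. -/
def PLP (d : StepData S) (c : CClause S) (L : Lit S) (r : List Nat)
    (c' : CClause S) (L' : Lit S) (r' : List Nat) : Prop :=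
  (UnchangedBy d c ∧ c' = c ∧ L' = L ∧ r' = r ∧ LitIn L c.1 ∧ L.2.HasPos r) ∨
  match d with
  | .mo P T fP =>
      c' = projCC P T fP c ∧ LitIn L c.1 ∧ L.2.HasPos r ∧
      ((L.2.pred ≠ P ∧ L' = L ∧ r' = r) ∨
       (L.2.pred = P ∧ L' = (L.1, ⟨T, [Term.app fP L.2.args]⟩) ∧
         ((r = [] ∧ r' = []) ∨ ∃ i rr, r = i :: rr ∧ r' = 0 :: i :: rr)))
  | .sh Γ Δ π Pr as₁ as₂ ts₁ ts₂ f s Sp x Γl Γr Δl Δr =>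
      c = shSrc Γ Δ π Pr as₁ as₂ ts₁ ts₂ f s ∧
      ( (c' = shLeft Γl Δl π Pr as₁ as₂ ts₁ ts₂ f Sp x ∧
          ( (L = (true, shEAtom Pr as₁ as₂ f ts₁ ts₂ s) ∧
             L' = (true, shEAtom Pr as₁ as₂ f ts₁ ts₂ (Term.var x)) ∧
             r' = r ∧ (shEAtom Pr as₁ as₂ f ts₁ ts₂ (Term.var x)).HasPos r) ∨
            (L = (true, shEAtom Pr as₁ as₂ f ts₁ ts₂ s) ∧ r = [as₁.length, ts₁.length] ∧
             L' = (false, (⟨Sp, [Term.var x]⟩ : Atom S)) ∧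
             (⟨Sp, [Term.var x]⟩ : Atom S).HasPos r') ∨
            (∃ A ∈ Γl, L = (false, A.subst (single x s)) ∧ L' = (false, A) ∧
               r' = r ∧ A.HasPos r) ∨
            (∃ A ∈ Δl, L = (true, A) ∧ L' = (true, A) ∧ r' = r ∧ A.HasPos r))) ∨
        (c' = shRight Γr Δr π s Sp ∧
          ( (L = (true, shEAtom Pr as₁ as₂ f ts₁ ts₂ s) ∧ r = [as₁.length, ts₁.length] ∧
             L' = (true, (⟨Sp, [s]⟩ : Atom S)) ∧ r' = []) ∨
            (∃ rr, L = (true, shEAtom Pr as₁ as₂ f ts₁ ts₂ s) ∧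
               r = as₁.length :: ts₁.length :: rr ∧
               L' = (true, (⟨Sp, [s]⟩ : Atom S)) ∧ r' = 0 :: rr ∧ Term.HasPos s rr) ∨
            (∃ A ∈ Γr, L = (false, A) ∧ L' = (false, A) ∧ r' = r ∧ A.HasPos r) ∨
            (∃ A ∈ Δr, L = (true, A) ∧ L' = (true, A) ∧ r' = r ∧ A.HasPos r))) )
  | .li Γ Δ π E E' x x' =>
      c = liSrc Γ Δ π E ∧ c' = liRes Γ Δ π E' x x' ∧
      ( (L = (true, E) ∧ L' = (true, E') ∧ r' = r ∧ E'.HasPos r) ∨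
        (∃ A ∈ Δ, L = (true, A) ∧ L' = (true, A) ∧ r' = r ∧ A.HasPos r) ∨
        (∃ A ∈ Γ, L = (false, A) ∧ L' = (false, A.subst (single x (Term.var x'))) ∧
           r' = r ∧ A.HasPos r) ∨
        (∃ A ∈ Γ, L = (false, A) ∧ L' = (false, A) ∧ r' = r ∧ A.HasPos r) )
  | .ref c0 x t =>
      c = c0 ∧ LitIn L c.1 ∧ L.2.HasPos r ∧
      ( (c' = refLeft c0 x t ∧ L' = L ∧ r' = r) ∨
        (c' = refRight c0 x t ∧ L' = (L.1, L.2.subst (single x t)) ∧ r' = r) )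

/-- Ancestor clause relation along an approximation sequence. -/
inductive AncC : List (StepData S) → CClause S → CClause S → Prop
  | nil (c : CClause S) : AncC [] c c
  | cons {d : StepData S} {ls : List (StepData S)} {c c' c'' : CClause S} :
      PCrel d c c' → AncC ls c' c'' → AncC (d :: ls) c c''

/-- Ancestor literal position relation along an approximation sequence. -/
inductive AncLP : List (StepData S) → CClause S → Lit S → List Nat →
    CClause S → Lit S → List Nat → Prop
  | nil (c : CClause S) (L : Lit S) (r : List Nat) : AncLP [] c L r c L r
  | cons {d : StepData S} {ls : List (StepData S)} {c c' c'' : CClause S}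
      {L L' L'' : Lit S} {r r' r'' : List Nat} :
      PLP d c L r c' L' r' → AncLP ls c' L' r' c'' L'' r'' →
      AncLP (d :: ls) c L r c'' L'' r''

/-- Ancestor variable relation along an approximation sequence. -/
inductive AncV : List (StepData S) → CClause S → Nat → CClause S → Nat → Prop
  | nil (c : CClause S) (x : Nat) : AncV [] c x c x
  | cons {d : StepData S} {ls : List (StepData S)} {c c' c'' : CClause S}
      {x y z : Nat} :
      PV d c x c' y → AncV ls c' y c'' z → AncV (d :: ls) c x c'' z

/-! ### Constrained term skeletons and descendants -/

/-- One step of the constrained term skeleton transformation: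
    `(t[x]_{p,q}; π) ⇒ (t[q/x']; π ∧ π{x ↦ x'})`. -/
inductive SktStep : Term S × Constr S → Term S × Constr S → Prop
  | step (t t' : Term S) (x x' : Nat) (π : Constr S) :
      ReplOne x x' t t' → x ∈ t'.varList → x' ∉ t.varList → ¬ π.HasVar x' →
      SktStep (t, π) (t', π.and (π.subst (single x (Term.var x'))))

/-- `(u, π')` is the constrained term skeleton of `(t, π)`. -/
def IsSktOf (uπ tπ : Term S × Constr S) : Prop :=
  Relation.ReflTransGen SktStep tπ uπ ∧ ∀ z, ¬ SktStep uπ z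

/-- Descendant relation (Definition 16): `D = C'δ` is a descendant of `(C;π)`
    and its literal `L'δ` maps to the literal position `(L, r)` of `(C;π)`. -/
def DescRel (ls : List (StepData S)) (c c' : CClause S) (δ : Subst S)
    (Lg : Lit S) (L : Lit S) (r : List Nat) : Prop :=
  ∃ L' : Lit S, Lg = (L'.1, L'.2.subst δ) ∧ LitIn Lg (c'.1.subst δ) ∧
    AncLP ls c L r c' L' []

/-! ### Saturation steps (inference, condensation, variant removal) -/

inductive SatStep (r : Atom S → Atom S → Prop) : Set (CClause S) → Set (CClause S) → Prop
  | infer (N : Set (CClause S)) (c : CClause S) :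
      (∃ p1 ∈ N, ∃ p2 ∈ N, IsResolvent r p1 p2 c) → SatStep r N (insert c N)
  | factor (N : Set (CClause S)) (c : CClause S) :
      (∃ p ∈ N, IsFactor r p c) → SatStep r N (insert c N)
  | condense (N : Set (CClause S)) (c c' : CClause S) :
      c ∈ N → Condensation c' c → SatStep r N (insert c' (N \ {c}))
  | delVariant (N : Set (CClause S)) (c c' : CClause S) :
      c ∈ N → c' ∈ N → c ≠ c' → groundOf c = groundOf c' → SatStep r N (N \ {c})

/-- Variables shared between two constrained clauses. -/
def ShVar (c c' : CClause S) (v : Nat) : Prop := c.HasVar v ∧ c'.HasVar v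

/-- The shallow ρ-resolvent (Definition 11):
    `(Γₗ{x ↦ sρ}, Γᵣρ → E[p/sρ], Δₗ, Δᵣρ; π ∧ πρ)`. -/
def shResolvent (Γl Γr Δl Δr : Multiset (Atom S)) (π : Constr S) (Pr : S.Pred)
    (as₁ as₂ ts₁ ts₂ : List (Term S)) (f : S.Func) (s : Term S) (x : Nat)
    (ρ : Subst S) : CClause S :=
  (⟨Γl.map (Atom.subst (single x (s.subst ρ))) + Γr.map (Atom.subst ρ),
    shEAtom Pr as₁ as₂ f ts₁ ts₂ (s.subst ρ) ::ₘ (Δl + Δr.map (Atom.subst ρ))⟩,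
   π.and (π.subst ρ))

end SDCPaper

/-!
Once Refinement is no longer applied, every step decreases, lexicographically, the triple formed
by the number of predicates with a non-monadic occurrence, the number of function symbol
occurrences at depth at least two in succedent atoms, and the number of repeated variable
occurrences in succedents, the last two summed over the (finite) clause set. Monadic removes one
non-monadic predicate; Shallow introduces only monadic atoms and moves the complex term `s` from
depth two to depth one, so it lowers the second count by one; Linear changes neither and replaces
a repeated occurrence by a fresh variable.
-/

lemma Multiset.card_sub_card_toFinset_lt_of_add_singleton_eq {α : Type*} [DecidableEq α]
    {m m' : Multiset α} {x x' : α} (h : m' + {x} = m + {x'}) (hx' : x' ∉ m) (hx : x ∈ m') :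
    Multiset.card m' - m'.toFinset.card < Multiset.card m - m.toFinset.card := by
  have hxx' : x ≠ x' := by
    rintro rfl
    exact hx' (add_right_cancel h ▸ hx)
  have hcard : Multiset.card m' = Multiset.card m := by
    simpa using congrArg Multiset.card h
  have hcount : Multiset.count x m = Multiset.count x m' + 1 := by
    simpa [Multiset.count_singleton, hxx'] using (congrArg (Multiset.count x) h).symm
  have hsupp : m'.toFinset = insert x' m.toFinset := by
    ext a
    have ha := congrArg (a ∈ ·) h
    simp only [Multiset.mem_add, Multiset.mem_singleton, eq_iff_iff] at ha
    simp only [Multiset.mem_toFinset, Finset.mem_insert]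
    grind
  have hnodup : ¬ m.Nodup := fun hm => by
    have := Multiset.nodup_iff_count_le_one.mp hm x
    have := Multiset.count_pos.mpr hx
    omega
  have hlt : m.toFinset.card < Multiset.card m :=
    (Multiset.toFinset_card_le m).lt_of_ne (mt Multiset.toFinset_card_eq_card_iff_nodup.mp hnodup)
  rw [hcard, hsupp, Finset.card_insert_of_notMem (by simpa using hx')]
  omega

lemma finsum_mem_insert_le_add {α : Type*} (w : α → ℕ) {M : Set α} (hM : M.Finite) (a : α) :
    ∑ᶠ i ∈ insert a M, w i ≤ w a + ∑ᶠ i ∈ M, w i := by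
  by_cases ha : a ∈ M
  · rw [Set.insert_eq_of_mem ha]
    exact Nat.le_add_left _ _
  · exact (finsum_mem_insert w ha hM).le

namespace SDCPaper

variable {S : Sig}

namespace Term

def funCount : Term S → ℕ
  | .var _ => 0
  | .app _ ts => (ts.map funCount).sum + 1

def argsFunCount : Term S → ℕ
  | .var _ => 0
  | .app _ ts => (ts.map funCount).sum

lemma IsComplex.funCount_eq {t : Term S} (h : t.IsComplex) :
    t.funCount = t.argsFunCount + 1 := by
  cases t with
  | var => exact h.elim
  | app => simp [funCount, argsFunCount]

@[simp] lemma varList_var (x : ℕ) : (Term.var x : Term S).varList = [x] := by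
  simp [Term.varList]

@[simp] lemma varList_app (f : S.Func) (ts : List (Term S)) :
    (Term.app f ts).varList = (ts.map Term.varList).flatten := by
  simp [Term.varList]

end Term

namespace ReplOne

variable {x x' : ℕ} {t t' : Term S}

lemma funCount_eq (h : ReplOne x x' t t') : t'.funCount = t.funCount := by
  induction h with
  | var => simp [Term.funCount]
  | app f ts₁ ts₂ u u' _ ih => simp [Term.funCount, ih]

lemma argsFunCount_eq (h : ReplOne x x' t t') : t'.argsFunCount = t.argsFunCount := by
  cases h with
  | var => rfl
  | app f ts₁ ts₂ u u' hu => simp [Term.argsFunCount, hu.funCount_eq]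

lemma varList_add_singleton (h : ReplOne x x' t t') :
    (t'.varList : Multiset ℕ) + {x} = (t.varList : Multiset ℕ) + {x'} := by
  induction h with
  | var => simp [add_comm]
  | app f ts₁ ts₂ u u' _ ih =>
    have key := congrArg (fun m => ((ts₁.map Term.varList).flatten : Multiset ℕ) + m +
      (ts₂.map Term.varList).flatten) ih
    simp only [Term.varList_app, List.map_append, List.map_cons, List.flatten_append,
      List.flatten_cons, ← Multiset.coe_add] at key ⊢
    convert key using 1 <;> abel

end ReplOne

namespace Atom

def shape (A : Atom S) : S.Pred × ℕ := (A.pred, A.args.length)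

def deepFunCount (A : Atom S) : ℕ := (A.args.map Term.argsFunCount).sum

@[simp] lemma shape_subst (σ : Subst S) (A : Atom S) : (A.subst σ).shape = A.shape := by
  simp [shape, subst]

@[simp] lemma shape_comp_subst (σ : Subst S) : shape ∘ Atom.subst σ = shape :=
  funext (shape_subst σ)

end Atom

namespace ReplOneAtom

variable {x x' : ℕ} {E E' : Atom S}

lemma shape_eq (h : ReplOneAtom x x' E E') : E'.shape = E.shape := by
  obtain ⟨P, as₁, as₂, t, t', rfl, rfl, -⟩ := h
  simp [Atom.shape]

lemma deepFunCount_eq (h : ReplOneAtom x x' E E') : E'.deepFunCount = E.deepFunCount := by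
  obtain ⟨P, as₁, as₂, t, t', rfl, rfl, ht⟩ := h
  simp [Atom.deepFunCount, ht.argsFunCount_eq]

lemma varList_add_singleton (h : ReplOneAtom x x' E E') :
    (E'.varList : Multiset ℕ) + {x} = (E.varList : Multiset ℕ) + {x'} := by
  obtain ⟨P, as₁, as₂, t, t', rfl, rfl, ht⟩ := h
  have key := congrArg (fun m => ((as₁.map Term.varList).flatten : Multiset ℕ) + m +
    (as₂.map Term.varList).flatten) ht.varList_add_singleton
  simp only [Atom.varList, List.map_append, List.map_cons, List.flatten_append,
    List.flatten_cons, ← Multiset.coe_add] at key ⊢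
  convert key using 1 <;> abel

end ReplOneAtom

def Clause.shapes (C : Clause S) : Multiset (S.Pred × ℕ) := (C.ante + C.succ).map Atom.shape

def nonMonadicPreds (N : Set (CClause S)) : Set S.Pred :=
  {P | ∃ c ∈ N, ∃ n ≠ 1, (P, n) ∈ c.1.shapes}

lemma nonMonadicPreds_finite {N : Set (CClause S)} (hN : N.Finite) :
    (nonMonadicPreds N).Finite := by
  refine (hN.biUnion fun c _ => (c.1.shapes.finite_toSet.image Prod.fst)).subset ?_
  rintro P ⟨c, hc, n, -, hP⟩
  exact Set.mem_biUnion hc ⟨(P, n), hP, rfl⟩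

lemma nonMonadicPreds_subset {N N' : Set (CClause S)}
    (h : ∀ c' ∈ N', ∃ c ∈ N, ∀ p ∈ c'.1.shapes, p.2 = 1 ∨ p ∈ c.1.shapes) :
    nonMonadicPreds N' ⊆ nonMonadicPreds N := by
  rintro P ⟨c', hc', n, hn, hP⟩
  obtain ⟨c, hc, hcover⟩ := h c' hc'
  exact ⟨c, hc, n, hn, (hcover _ hP).resolve_left hn⟩

namespace CClause

def succDeepFunCount (c : CClause S) : ℕ := (c.1.succ.map Atom.deepFunCount).sum

def succVars (c : CClause S) : Multiset ℕ := c.1.succ.bind fun A => (A.varList : Multiset ℕ)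

def succVarRepeats (c : CClause S) : ℕ := Multiset.card c.succVars - c.succVars.toFinset.card

end CClause

noncomputable def apMeasure (N : Set (CClause S)) : ℕ ×ₗ ℕ ×ₗ ℕ :=
  toLex ((nonMonadicPreds N).ncard,
    toLex (∑ᶠ c ∈ N, c.succDeepFunCount, ∑ᶠ c ∈ N, c.succVarRepeats))

lemma apMeasure_lt_of_subset {N N' : Set (CClause S)} (hN : N.Finite)
    (hpreds : nonMonadicPreds N' ⊆ nonMonadicPreds N)
    (h : toLex (∑ᶠ c ∈ N', c.succDeepFunCount, ∑ᶠ c ∈ N', c.succVarRepeats) <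
      toLex (∑ᶠ c ∈ N, c.succDeepFunCount, ∑ᶠ c ∈ N, c.succVarRepeats)) :
    apMeasure N' < apMeasure N :=
  Prod.Lex.toLex_lt_toLex'.2 ⟨Set.ncard_le_ncard hpreds (nonMonadicPreds_finite hN), fun _ => h⟩

open Classical in
lemma shape_projAtom (P T : S.Pred) (fP : S.Func) (A : Atom S) :
    (projAtom P T fP A).shape = if A.pred = P then (T, 1) else A.shape := by
  unfold projAtom
  split_ifs <;> simp [Atom.shape]

lemma MonadicStep.ncard_nonMonadicPreds_lt {P T : S.Pred} {fP : S.Func}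
    {N N' : Set (CClause S)} (hN : N.Finite) (h : MonadicStep P T fP N N') :
    (nonMonadicPreds N').ncard < (nonMonadicPreds N).ncard := by
  obtain ⟨-, ⟨c, hc, A, hA, rfl, hA1⟩, -, -, rfl⟩ := h
  have hsub : nonMonadicPreds (projCC A.pred T fP '' N) ⊆ nonMonadicPreds N \ {A.pred} := by
    rintro Q ⟨_, ⟨c', hc', rfl⟩, n, hn, hQ⟩
    simp only [projCC, projClause, Clause.shapes, ← Multiset.map_add, Multiset.map_map,
      Function.comp_def, shape_projAtom, Multiset.mem_map] at hQ
    obtain ⟨B, hB, hBQ⟩ := hQ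
    split_ifs at hBQ with hBA
    · exact absurd (congrArg Prod.snd hBQ).symm hn
    · refine ⟨⟨c', hc', n, hn, Multiset.mem_map.mpr ⟨B, hB, hBQ⟩⟩, ?_⟩
      rintro rfl
      exact hBA (congrArg Prod.fst hBQ)
  have hA : A.pred ∈ nonMonadicPreds N :=
    ⟨c, hc, A.args.length, hA1, Multiset.mem_map_of_mem _ hA⟩
  exact Set.ncard_lt_ncard ⟨hsub.trans Set.sdiff_subset, fun hle => (hsub (hle hA)).2 rfl⟩
    (nonMonadicPreds_finite hN)

section Shallow

variable {M : Set (CClause S)} {Γ Δ Γl Γr Δl Δr : Multiset (Atom S)} {π : Constr S}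
  {Pr : S.Pred} {as₁ as₂ ts₁ ts₂ : List (Term S)} {f : S.Func} {s : Term S} {Sp : S.Pred}
  {x : ℕ}

@[simp] lemma shape_shEAtom (t : Term S) :
    (shEAtom Pr as₁ as₂ f ts₁ ts₂ t).shape = (Pr, as₁.length + as₂.length + 1) := by
  simp [shEAtom, Atom.shape, add_assoc]

lemma shapes_shLeft (hΓ : Γl.map (Atom.subst (single x s)) + Γr = Γ) (hΔ : Δl + Δr = Δ) :
    ∀ p ∈ (shLeft Γl Δl π Pr as₁ as₂ ts₁ ts₂ f Sp x).1.shapes,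
      p.2 = 1 ∨ p ∈ (shSrc Γ Δ π Pr as₁ as₂ ts₁ ts₂ f s).1.shapes := by
  subst hΓ hΔ
  rintro p hp
  simp only [shLeft, shSrc, Clause.shapes, Multiset.map_add, Multiset.map_cons, Multiset.mem_add,
    Multiset.mem_cons, Multiset.map_map, Atom.shape_comp_subst, shape_shEAtom] at hp ⊢
  grind [Atom.shape]

lemma shapes_shRight (hΓ : Γl.map (Atom.subst (single x s)) + Γr = Γ) (hΔ : Δl + Δr = Δ) :
    ∀ p ∈ (shRight Γr Δr π s Sp).1.shapes,
      p.2 = 1 ∨ p ∈ (shSrc Γ Δ π Pr as₁ as₂ ts₁ ts₂ f s).1.shapes := by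
  subst hΓ hΔ
  rintro p hp
  simp only [shRight, shSrc, Clause.shapes, Multiset.map_add, Multiset.map_cons, Multiset.mem_add,
    Multiset.mem_cons, Multiset.map_map, Atom.shape_comp_subst, shape_shEAtom] at hp ⊢
  grind [Atom.shape]

lemma succDeepFunCount_shLeft_add_shRight (hs : s.IsComplex) (hΔ : Δl + Δr = Δ) :
    (shLeft Γl Δl π Pr as₁ as₂ ts₁ ts₂ f Sp x).succDeepFunCount +
      (shRight Γr Δr π s Sp).succDeepFunCount + 1 =
    (shSrc Γ Δ π Pr as₁ as₂ ts₁ ts₂ f s).succDeepFunCount := by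
  subst hΔ
  simp [CClause.succDeepFunCount, shLeft, shRight, shSrc, shEAtom, shETerm, Atom.deepFunCount,
    Term.argsFunCount, Term.funCount, hs.funCount_eq, add_comm, add_left_comm, add_assoc]

lemma apMeasure_shallow (hM : M.Finite) (hsrc : shSrc Γ Δ π Pr as₁ as₂ ts₁ ts₂ f s ∉ M)
    (h : ShallowCond (insert (shSrc Γ Δ π Pr as₁ as₂ ts₁ ts₂ f s) M)
      Γ Δ Γl Γr Δl Δr π Pr as₁ as₂ ts₁ ts₂ f s Sp x) :
    apMeasure (insert (shLeft Γl Δl π Pr as₁ as₂ ts₁ ts₂ f Sp x)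
        (insert (shRight Γr Δr π s Sp) M)) <
      apMeasure (insert (shSrc Γ Δ π Pr as₁ as₂ ts₁ ts₂ f s) M) := by
  obtain ⟨hs, -, -, hΓ, hΔ, -, -⟩ := h
  refine apMeasure_lt_of_subset (hM.insert _) (nonMonadicPreds_subset ?_)
    (Prod.Lex.toLex_lt_toLex.2 (Or.inl ?_))
  · rintro c (rfl | rfl | hc)
    · exact ⟨_, Set.mem_insert _ _, shapes_shLeft hΓ hΔ⟩
    · exact ⟨_, Set.mem_insert _ _, shapes_shRight hΓ hΔ⟩
    · exact ⟨c, Set.mem_insert_of_mem _ hc, fun p hp => Or.inr hp⟩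
  · have hl := finsum_mem_insert_le_add CClause.succDeepFunCount
      (hM.insert (shRight Γr Δr π s Sp)) (shLeft Γl Δl π Pr as₁ as₂ ts₁ ts₂ f Sp x)
    have hr := finsum_mem_insert_le_add CClause.succDeepFunCount hM (shRight Γr Δr π s Sp)
    rw [finsum_mem_insert CClause.succDeepFunCount hsrc hM,
      ← succDeepFunCount_shLeft_add_shRight (Γl := Γl) (Γr := Γr) (Sp := Sp) (x := x) hs hΔ]
    omega

end Shallow

section Linear

variable {M : Set (CClause S)} {Γ Δ : Multiset (Atom S)} {π : Constr S} {E E' : Atom S}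
  {x x' : ℕ}

lemma shapes_liRes (hrep : ReplOneAtom x x' E E') :
    ∀ p ∈ (liRes Γ Δ π E' x x').1.shapes, p ∈ (liSrc Γ Δ π E).1.shapes := by
  simp [liRes, liSrc, Clause.shapes, hrep.shape_eq]

lemma succDeepFunCount_liRes (hrep : ReplOneAtom x x' E E') :
    (liRes Γ Δ π E' x x').succDeepFunCount = (liSrc Γ Δ π E).succDeepFunCount := by
  simp [CClause.succDeepFunCount, liRes, liSrc, hrep.deepFunCount_eq]

lemma mem_succVars {c : CClause S} {y : ℕ} :
    y ∈ c.succVars ↔ ∃ A ∈ c.1.succ, VarInAtom y A := by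
  simp [CClause.succVars, VarInAtom]

lemma succVarRepeats_liRes_lt (h : LinearCond Γ Δ π E E' x x') :
    (liRes Γ Δ π E' x x').succVarRepeats < (liSrc Γ Δ π E).succVarRepeats := by
  obtain ⟨hrep, hfresh, hkeep⟩ := h
  apply Multiset.card_sub_card_toFinset_lt_of_add_singleton_eq (x := x) (x' := x')
  · have := congrArg (· + Δ.bind fun A => (A.varList : Multiset ℕ)) hrep.varList_add_singleton
    simp only [CClause.succVars, liRes, liSrc, Multiset.cons_bind] at this ⊢
    convert this using 1 <;> abel
  · exact fun hx' => hfresh (Or.inr (Or.inl (mem_succVars.mp hx')))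
  · exact mem_succVars.mpr (by simpa [liRes] using hkeep)

lemma apMeasure_linear (hM : M.Finite) (hsrc : liSrc Γ Δ π E ∉ M)
    (h : LinearCond Γ Δ π E E' x x') :
    apMeasure (insert (liRes Γ Δ π E' x x') M) < apMeasure (insert (liSrc Γ Δ π E) M) := by
  refine apMeasure_lt_of_subset (hM.insert _) (nonMonadicPreds_subset ?_)
    (Prod.Lex.toLex_lt_toLex'.2 ⟨?_, fun _ => ?_⟩)
  · rintro c (rfl | hc)
    · exact ⟨_, Set.mem_insert _ _, fun p hp => Or.inr (shapes_liRes h.1 p hp)⟩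
    · exact ⟨c, Set.mem_insert_of_mem _ hc, fun p hp => Or.inr hp⟩
  · rw [finsum_mem_insert CClause.succDeepFunCount hsrc hM, ← succDeepFunCount_liRes h.1]
    exact finsum_mem_insert_le_add _ hM _
  · have hres := finsum_mem_insert_le_add CClause.succVarRepeats hM (liRes Γ Δ π E' x x')
    have hlt := succVarRepeats_liRes_lt h
    rw [finsum_mem_insert CClause.succVarRepeats hsrc hM]
    omega

end Linear

lemma DStep.finite {N N' : Set (CClause S)} {d : StepData S} (hN : N.Finite)
    (h : DStep N d N') : N'.Finite := by
  cases h with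
  | mo _ _ _ _ _ h => exact h.2.2.2.2 ▸ hN.image _
  | sh => exact ((hN.subset (Set.subset_insert _ _)).insert _).insert _
  | li => exact (hN.subset (Set.subset_insert _ _)).insert _
  | ref => exact ((hN.subset (Set.subset_insert _ _)).insert _).insert _

lemma DStep.apMeasure_lt {N N' : Set (CClause S)} {d : StepData S} (hN : N.Finite)
    (h : DStep N d N') (hd : d.rule ≠ 0) : apMeasure N' < apMeasure N := by
  cases h with
  | mo _ _ _ _ _ h => exact Prod.Lex.toLex_lt_toLex.2 (Or.inl (h.ncard_nonMonadicPreds_lt hN))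
  | sh _ _ _ _ _ _ _ _ _ _ _ _ _ _ _ _ _ hsrc h =>
    exact apMeasure_shallow (hN.subset (Set.subset_insert _ _)) hsrc h
  | li _ _ _ _ _ _ _ _ hsrc h =>
    exact apMeasure_linear (hN.subset (Set.subset_insert _ _)) hsrc h
  | ref => exact absurd rfl hd

/-- **Termination of the approximation rewrite system.**
The priority rewrite system `⇒_AP` consisting of the Refinement, Monadic,
Shallow, and Linear transformations (with priority
Refinement > Monadic > Shallow > Linear, and Refinement applied only finitely
often) terminates: there is no infinite sequence
`N₀ ⇒_AP N₁ ⇒_AP N₂ ⇒_AP ⋯` (starting from a finite clause set). -/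
theorem apr_terminates
    (f : ℕ → Set (CClause S)) (d : ℕ → StepData S)
    (h0 : (f 0).Finite)
    (hstep : ∀ n, APStepPrio (f n) (d n) (f (n + 1)))
    (href : {n | (d n).rule = 0}.Finite) :
    False := by
  have hfin : ∀ n, (f n).Finite := fun n => Nat.rec h0 (fun n ih => (hstep n).1.finite ih) n
  obtain ⟨B, hB⟩ := href.bddAbove
  obtain ⟨k, hk⟩ := WellFounded.not_rel_apply_succ (r := (· < ·))
    fun k => apMeasure (f (B + 1 + k))
  refine hk ((hstep _).1.apMeasure_lt (hfin _) fun hrule => ?_)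
  have hle := hB hrule
  omega

end SDCPaper
end

section
/- The approximation is an over-approximation: if N ⇒_AP N' by a single step of the Refinement, Monadic, Shallow, or Linear transformation and N' is satisfiable, then N is satisfiable. -/
/- Common formalization of first-order clauses with straight dismatching
   constraints (SDC), following Teucke & Weidenbach,
   "Decidability of the Monadic Shallow Linear First-Order Fragment with
   Straight Dismatching Constraints". -/

set_option linter.unusedVariables false

namespace SDCPaper

variable {S : Sig}

/-! A model of `N'` is turned into one of `N`: for Monadic it is pulled back along the encoding
`P(t⃗) ↦ T(f_P(t⃗))`, otherwise it is kept. Refinement splits the ground instances `Cδ` between its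
two results according to whether `xδ` is an instance of `t`. For Shallow, the instance at `δ` is a
resolvent on `S(sδ)` of the instances of the two new clauses at `δ[x ↦ sδ]` and `δ`. For Linear,
the instance at `δ` contains every literal of the linearised clause's instance at `δ[x' ↦ xδ]`. -/

section Substitution

@[elab_as_elim]
theorem Term.ind {P : Term S → Prop} (var : ∀ x, P (.var x))
    (app : ∀ f ts, (∀ t ∈ ts, P t) → P (.app f ts)) : ∀ t, P t
  | .var x => var x
  | .app f ts => app f ts fun t _ => Term.ind var app t
termination_by t => sizeOf t
decreasing_by simp_wf; have := List.sizeOf_lt_of_mem ‹t ∈ ts›; omega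

@[simp] theorem Term.subst_var (σ : Subst S) (x : Nat) : (Term.var x).subst σ = σ x := by
  rw [Term.subst]

@[simp] theorem Term.subst_app (σ : Subst S) (f : S.Func) (ts : List (Term S)) :
    (Term.app f ts).subst σ = .app f (ts.map (Term.subst σ)) := by
  rw [Term.subst]
  simp

@[simp] theorem Term.varList_var_s10 (x : Nat) : (Term.var x : Term S).varList = [x] := by
  rw [Term.varList]

@[simp] theorem Term.varList_app_s10 (f : S.Func) (ts : List (Term S)) :
    (Term.app f ts).varList = (ts.map Term.varList).flatten := by
  rw [Term.varList]
  simp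

theorem Term.subst_congr {σ τ : Subst S} (t : Term S) (h : ∀ y ∈ t.varList, σ y = τ y) :
    t.subst σ = t.subst τ := by
  induction t using Term.ind with
  | var x => simpa using h x
  | app f ts ih =>
    simp only [Term.subst_app, Term.app.injEq, true_and]
    refine List.map_congr_left fun t ht => ih t ht fun y hy => h y ?_
    simpa [List.mem_flatten] using ⟨t, ht, hy⟩

theorem Term.subst_subst (t : Term S) (σ τ : Subst S) :
    (t.subst σ).subst τ = t.subst fun y => (σ y).subst τ := by
  induction t using Term.ind with
  | var x => simp
  | app f ts ih =>
    simp only [Term.subst_app, List.map_map, Term.app.injEq, true_and]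
    exact List.map_congr_left ih

theorem Term.isGround_subst {σ : Subst S} (t : Term S) (h : ∀ y ∈ t.varList, (σ y).IsGround) :
    (t.subst σ).IsGround := by
  induction t using Term.ind with
  | var x => simpa using h x
  | app f ts ih =>
    simp only [Term.IsGround, Term.subst_app, Term.varList_app_s10, List.map_map,
      List.flatten_eq_nil_iff, List.mem_map] at ih ⊢
    rintro _ ⟨t, ht, rfl⟩
    exact ih t ht fun y hy => h y (by simpa [List.mem_flatten] using ⟨t, ht, hy⟩)

theorem Term.isGround_of_isGround_subst {σ : Subst S} {y : Nat} (t : Term S)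
    (h : (t.subst σ).IsGround) (hy : y ∈ t.varList) : (σ y).IsGround := by
  induction t using Term.ind with
  | var x => simp_all
  | app f ts ih =>
    simp only [Term.IsGround, Term.subst_app, List.map_map, Term.varList_app_s10,
      List.flatten_eq_nil_iff, List.mem_map] at h
    simp only [Term.varList_app_s10, List.mem_flatten, List.mem_map] at hy
    obtain ⟨_, ⟨t, ht, rfl⟩, hy⟩ := hy
    exact ih t ht (h _ ⟨t, ht, rfl⟩) hy

theorem ReplOne.subst_eq {x x' : Nat} {t t' : Term S} (h : ReplOne x x' t t') {σ : Subst S}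
    (hσ : σ x' = σ x) : t'.subst σ = t.subst σ := by
  induction h with
  | var => simp [hσ]
  | app f ts₁ ts₂ t t' _ ih => simp [ih]

theorem single_subst_eq_update (x : Nat) (u : Term S) (τ : Subst S) :
    (fun y => (single x u y).subst τ) = Function.update τ x (u.subst τ) := by
  ext1 y
  by_cases hy : y = x <;> simp [single, hy]

theorem IsGroundSubst.update {δ : Subst S} (hδ : IsGroundSubst δ) (x : Nat) {u : Term S}
    (hu : u.IsGround) : IsGroundSubst (Function.update δ x u) := by
  intro y
  by_cases hy : y = x
  · simpa [hy] using hu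
  · simpa [hy] using hδ y

theorem Atom.mem_varList {A : Atom S} {y : Nat} :
    y ∈ A.varList ↔ ∃ t ∈ A.args, y ∈ t.varList := by
  simp [Atom.varList, List.mem_flatten]

theorem Atom.subst_congr {σ τ : Subst S} (A : Atom S) (h : ∀ y ∈ A.varList, σ y = τ y) :
    A.subst σ = A.subst τ := by
  simp only [Atom.subst, Atom.mk.injEq, true_and]
  exact List.map_congr_left fun t ht =>
    t.subst_congr fun y hy => h y (Atom.mem_varList.mpr ⟨t, ht, hy⟩)

theorem Atom.subst_subst (A : Atom S) (σ τ : Subst S) :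
    (A.subst σ).subst τ = A.subst fun y => (σ y).subst τ := by
  simp only [Atom.subst, List.map_map, Atom.mk.injEq, true_and]
  exact List.map_congr_left fun t _ => t.subst_subst σ τ

theorem Atom.subst_single_subst (A : Atom S) (x : Nat) (u : Term S) (τ : Subst S) :
    (A.subst (single x u)).subst τ = A.subst (Function.update τ x (u.subst τ)) := by
  rw [Atom.subst_subst, single_subst_eq_update]

theorem Clause.subst_subst (C : Clause S) (σ τ : Subst S) :
    (C.subst σ).subst τ = C.subst fun y => (σ y).subst τ := by
  simp only [Clause.subst, Multiset.map_map, Function.comp_def, Atom.subst_subst]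

theorem CClause.subst_fst_congr {c : CClause S} {σ τ : Subst S}
    (h : ∀ y, c.HasVar y → σ y = τ y) : c.1.subst σ = c.1.subst τ := by
  simp only [Clause.subst, Clause.mk.injEq]
  constructor <;> refine Multiset.map_congr rfl fun A hA => A.subst_congr fun y hy => h y ?_
  exacts [Or.inl ⟨A, hA, hy⟩, Or.inr (Or.inl ⟨A, hA, hy⟩)]

theorem CClause.subst_fst_update_of_not_hasVar {c : CClause S} {x : Nat} (hx : ¬ c.HasVar x)
    (δ : Subst S) (u : Term S) : c.1.subst (Function.update δ x u) = c.1.subst δ :=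
  CClause.subst_fst_congr fun y hy => Function.update_of_ne (by rintro rfl; exact hx hy) _ _

end Substitution

section Solutions

theorem Solves.isGroundSubst {δ : Subst S} {π : Constr S} (h : Solves δ π) : IsGroundSubst δ := by
  cases π with
  | bot => exact h.elim
  | conj cs => exact h.1

theorem Solves.congr {δ τ : Subst S} {π : Constr S} (hδ : Solves δ π) (hτ : IsGroundSubst τ)
    (h : ∀ y, π.HasVar y → τ y = δ y) : Solves τ π := by
  cases π with
  | bot => exact hδ
  | conj cs =>
    refine ⟨hτ, fun c hc => ?_⟩
    rw [c.1.subst_congr fun y hy => h y ⟨c, hc, Or.inl hy⟩]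
    exact hδ.2 c hc

theorem Solves.update {δ : Subst S} {π : Constr S} (hδ : Solves δ π) {x : Nat}
    (hx : ¬ π.HasVar x) {u : Term S} (hu : u.IsGround) : Solves (Function.update δ x u) π :=
  hδ.congr (hδ.isGroundSubst.update x hu) fun y hy =>
    Function.update_of_ne (by rintro rfl; exact hx hy) _ _

theorem solves_subst_of_solves_comp {δ σ : Subst S} {π : Constr S} (hδ : IsGroundSubst δ)
    (h : Solves (fun y => (σ y).subst δ) π) : Solves δ (π.subst σ) := by
  cases π with
  | bot => exact h
  | conj cs =>
    refine ⟨hδ, ?_⟩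
    simp only [List.mem_map, forall_exists_index, and_imp]
    rintro _ c hc rfl
    simpa [Term.subst_subst] using h.2 c hc

theorem solves_and {δ : Subst S} {π ρ : Constr S} :
    Solves δ (π.and ρ) ↔ Solves δ π ∧ Solves δ ρ := by
  cases π <;> cases ρ <;> simp only [Constr.and, Solves, List.mem_append] <;> aesop

theorem subst_mem_groundOf_subst {c : CClause S} {σ δ τ : Subst S} (hδ : Solves δ c.2)
    (hτ : IsGroundSubst τ) (h : ∀ y, c.HasVar y → (σ y).subst τ = δ y) :
    c.1.subst δ ∈ groundOf (c.subst σ) := by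
  refine ⟨τ, solves_subst_of_solves_comp hτ ?_, ?_⟩
  · refine hδ.congr (fun y => (σ y).isGround_subst fun z _ => hτ z) fun y hy => ?_
    exact h y (Or.inr (Or.inr hy))
  · rw [CClause.subst, Clause.subst_subst]
    exact CClause.subst_fst_congr fun y hy => (h y hy).symm

end Solutions

section GroundSemantics

variable {I : HIntp S}

theorem SatGround.mono {D D' : Clause S} (h : SatGround I D) (hante : D.ante ⊆ D'.ante)
    (hsucc : D.succ ⊆ D'.succ) : SatGround I D' := by
  rcases h with ⟨A, hA, hAI⟩ | ⟨A, hA, hAI⟩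
  exacts [Or.inl ⟨A, hsucc hA, hAI⟩, Or.inr ⟨A, hante hA, hAI⟩]

theorem SatGround.resolve {A : Atom S} {Γ₁ Δ₁ Γ₂ Δ₂ : Multiset (Atom S)}
    (h₁ : SatGround I ⟨A ::ₘ Γ₁, Δ₁⟩) (h₂ : SatGround I ⟨Γ₂, A ::ₘ Δ₂⟩) :
    SatGround I ⟨Γ₁ + Γ₂, Δ₁ + Δ₂⟩ := by
  by_cases hA : A ∈ I
  · rcases h₁ with ⟨B, hB, hBI⟩ | ⟨B, hB, hBI⟩
    · exact Or.inl ⟨B, Multiset.mem_add.mpr (Or.inl hB), hBI⟩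
    · obtain rfl | hB := Multiset.mem_cons.mp hB
      · exact absurd hA hBI
      · exact Or.inr ⟨B, Multiset.mem_add.mpr (Or.inl hB), hBI⟩
  · rcases h₂ with ⟨B, hB, hBI⟩ | ⟨B, hB, hBI⟩
    · obtain rfl | hB := Multiset.mem_cons.mp hB
      · exact absurd hBI hA
      · exact Or.inl ⟨B, Multiset.mem_add.mpr (Or.inr hB), hBI⟩
    · exact Or.inr ⟨B, Multiset.mem_add.mpr (Or.inr hB), hBI⟩

theorem satSet_insert {c : CClause S} {N : Set (CClause S)} :
    SatSet I (insert c N) ↔ SatCC I c ∧ SatSet I N :=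
  Set.forall_mem_insert

end GroundSemantics

section Monadic

variable (P T : S.Pred) (fP : S.Func)

theorem projAtom_subst (A : Atom S) (δ : Subst S) :
    (projAtom P T fP A).subst δ = projAtom P T fP (A.subst δ) := by
  by_cases h : A.pred = P <;> simp [projAtom, h, Atom.subst]

theorem projClause_subst (C : Clause S) (δ : Subst S) :
    (projClause P T fP C).subst δ = projClause P T fP (C.subst δ) := by
  simp [projClause, Clause.subst, Multiset.map_map, projAtom_subst]

theorem satGround_projClause_iff {I : HIntp S} {D : Clause S} :
    SatGround I (projClause P T fP D) ↔ SatGround (projAtom P T fP ⁻¹' I) D := by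
  simp [SatGround, projClause]

theorem SatCC.of_projCC {I : HIntp S} {c : CClause S} (h : SatCC I (projCC P T fP c)) :
    SatCC (projAtom P T fP ⁻¹' I) c := by
  rintro _ ⟨δ, hδ, rfl⟩
  rw [← satGround_projClause_iff, ← projClause_subst]
  exact h _ ⟨δ, hδ, rfl⟩

theorem MonadicStep.satSet {N N' : Set (CClause S)} (h : MonadicStep P T fP N N')
    {I : HIntp S} (hI : SatSet I N') : SatSet (projAtom P T fP ⁻¹' I) N := by
  obtain ⟨-, -, -, -, rfl⟩ := h
  exact fun c hc => (hI _ ⟨c, hc, rfl⟩).of_projCC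

end Monadic

section Refinement

variable {I : HIntp S} {c : CClause S} {x : Nat} {t : Term S}

theorem RefineClause.satCC (hc : RefineClause c x t) (hl : SatCC I (refLeft c x t))
    (hr : SatCC I (refRight c x t)) : SatCC I c := by
  classical
  rintro _ ⟨δ, hδ, rfl⟩
  by_cases hinst : IsInstanceOf (δ x) t
  · obtain ⟨σ, hσ⟩ := hinst
    -- take `σ` on the variables of `t` and `δ` elsewhere; they are disjoint from those of `c`
    let τ : Subst S := fun y => if y ∈ t.varList then σ y else δ y
    have hτ : IsGroundSubst τ := fun y => by
      by_cases hy : y ∈ t.varList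
      · simpa [τ, hy] using t.isGround_of_isGround_subst (hσ ▸ hδ.isGroundSubst x) hy
      · simpa [τ, hy] using hδ.isGroundSubst y
    have hτt : t.subst τ = δ x := by
      rw [hσ]; exact t.subst_congr fun y hy => by simp [τ, hy]
    refine hr _ (subst_mem_groundOf_subst hδ hτ fun y hy => ?_)
    by_cases hyx : y = x
    · simpa [single, hyx] using hτt
    · have hyt : y ∉ t.varList := fun hyt => hc.2.2 y hyt hy
      simp [single, hyx, τ, hyt]
  · refine hl _ ⟨δ, solves_and.mpr ⟨hδ, hδ.isGroundSubst, ?_⟩, rfl⟩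
    simpa using hinst

end Refinement

section Shallow

variable {I : HIntp S} {N : Set (CClause S)} {Γ Δ Γl Γr Δl Δr : Multiset (Atom S)}
  {π : Constr S} {Pr Sp : S.Pred} {as₁ as₂ ts₁ ts₂ : List (Term S)} {f : S.Func}
  {s : Term S} {x : Nat}

theorem shEAtom_subst_congr {σ : Subst S} {u v : Term S} (h : u.subst σ = v.subst σ) :
    (shEAtom Pr as₁ as₂ f ts₁ ts₂ u).subst σ = (shEAtom Pr as₁ as₂ f ts₁ ts₂ v).subst σ := by
  simp [shEAtom, shETerm, Atom.subst, h]

theorem varInAtom_shEAtom {y : Nat} (hy : y ∈ s.varList) :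
    VarInAtom y (shEAtom Pr as₁ as₂ f ts₁ ts₂ s) :=
  Atom.mem_varList.mpr ⟨shETerm f ts₁ ts₂ s, by simp [shEAtom],
    by simpa [shETerm, List.mem_flatten] using Or.inr (Or.inl hy)⟩

theorem ShallowCond.satCC (hc : ShallowCond N Γ Δ Γl Γr Δl Δr π Pr as₁ as₂ ts₁ ts₂ f s Sp x)
    (hl : SatCC I (shLeft Γl Δl π Pr as₁ as₂ ts₁ ts₂ f Sp x))
    (hr : SatCC I (shRight Γr Δr π s Sp)) : SatCC I (shSrc Γ Δ π Pr as₁ as₂ ts₁ ts₂ f s) := by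
  obtain ⟨-, -, hx, rfl, rfl, -, -⟩ := hc
  rintro _ ⟨δ, hδ, rfl⟩
  set δ' := Function.update δ x (s.subst δ)
  have hfresh : ∀ A ∈ shEAtom Pr as₁ as₂ f ts₁ ts₂ s ::ₘ (Δl + Δr), A.subst δ' = A.subst δ :=
    fun A hA => A.subst_congr fun y hy =>
      Function.update_of_ne (by rintro rfl; exact hx (Or.inr (Or.inl ⟨A, hA, hy⟩))) _ _
  have hE := hfresh _ (Multiset.mem_cons_self _ _)
  have hΔl : Δl.map (Atom.subst δ') = Δl.map (Atom.subst δ) := Multiset.map_congr rfl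
    fun B hB => hfresh B (Multiset.mem_cons_of_mem (Multiset.mem_add.mpr (Or.inl hB)))
  have hs : s.subst δ' = s.subst δ := s.subst_congr fun y hy =>
    Function.update_of_ne (by rintro rfl; exact hx (Or.inr (Or.inl
      ⟨_, Multiset.mem_cons_self _ _, varInAtom_shEAtom hy⟩))) _ _
  have hleft := hl _ ⟨δ', hδ.update (fun h => hx (Or.inr (Or.inr h)))
    (s.isGround_subst fun y _ => hδ.isGroundSubst y), rfl⟩
  have hright := hr _ ⟨δ, hδ, rfl⟩
  simp only [shLeft, shRight, Clause.subst, Multiset.map_cons] at hleft hright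
  have hSx : (⟨Sp, [Term.var x]⟩ : Atom S).subst δ' = (⟨Sp, [s]⟩ : Atom S).subst δ := by
    simp [Atom.subst, δ']
  have hEx : (shEAtom Pr as₁ as₂ f ts₁ ts₂ (Term.var x)).subst δ' =
      (shEAtom Pr as₁ as₂ f ts₁ ts₂ s).subst δ := by
    rw [shEAtom_subst_congr (v := s) (by simp [δ', hs]), hE]
  rw [hSx, hEx, hΔl] at hleft
  refine (hleft.resolve hright).mono (Multiset.subset_of_le (le_of_eq ?_))
    (Multiset.subset_of_le (le_of_eq ?_))
  · simp [shSrc, Clause.subst, Multiset.map_map, Atom.subst_single_subst, δ']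
  · simp [shSrc, Clause.subst]
end Shallow

section Linear

variable {I : HIntp S} {Γ Δ : Multiset (Atom S)} {π : Constr S} {E E' : Atom S} {x x' : Nat}

theorem ReplOneAtom.subst_eq (h : ReplOneAtom x x' E E') {σ : Subst S} (hσ : σ x' = σ x) :
    E'.subst σ = E.subst σ := by
  obtain ⟨P, as₁, as₂, t, t', rfl, rfl, ht⟩ := h
  simp [Atom.subst, ht.subst_eq hσ]

theorem LinearCond.satCC (hc : LinearCond Γ Δ π E E' x x') (h : SatCC I (liRes Γ Δ π E' x x')) :
    SatCC I (liSrc Γ Δ π E) := by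
  obtain ⟨hE, hx', -⟩ := hc
  rintro _ ⟨δ, hδ, rfl⟩
  rw [← CClause.subst_fst_update_of_not_hasVar hx' δ (δ x)]
  set δ' := Function.update δ x' (δ x)
  have hδ'x' : δ' x' = δ x := Function.update_self _ _ _
  have hδ'x : δ' x = δ x := by
    by_cases hxx : x = x'
    · subst hxx; exact hδ'x'
    · exact Function.update_of_ne hxx _ _
  have hσ : Function.update δ' x (δ' x') = δ' := by
    rw [hδ'x', ← hδ'x, Function.update_eq_self]
  have hπ : Solves δ' π := hδ.update (fun h => hx' (Or.inr (Or.inr h))) (hδ.isGroundSubst x)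
  have hsolves : Solves δ' (π.and (π.subst (single x (Term.var x')))) := by
    refine solves_and.mpr ⟨hπ, solves_subst_of_solves_comp hπ.isGroundSubst ?_⟩
    rwa [single_subst_eq_update, Term.subst_var, hσ]
  refine (h _ ⟨δ', hsolves, rfl⟩).mono ?_ ?_
  · simp [liRes, liSrc, Clause.subst, Multiset.map_map, Atom.subst_single_subst, hσ,
      Multiset.subset_iff]
  · simp [liRes, liSrc, Clause.subst, hE.subst_eq (hδ'x'.trans hδ'x.symm)]

end Linear

/-- **The approximation is an over-approximation.**
If `N ⇒_AP N'` by a single step of the Refinement, Monadic, Shallow, or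
Linear transformation and `N'` is satisfiable, then `N` is satisfiable. -/
theorem apr_over_approximation
    (N N' : Set (CClause S)) (d : StepData S)
    (h : DStep N d N') (hsat : Satisfiable N') :
    Satisfiable N := by
  obtain ⟨I, hI⟩ := hsat
  cases h with
  | mo N N' P T fP hmo => exact ⟨_, hmo.satSet P T fP hI⟩
  | sh M Γ Δ Γl Γr Δl Δr π Pr as₁ as₂ ts₁ ts₂ f s Sp x _ hc =>
    rw [satSet_insert, satSet_insert] at hI
    exact ⟨I, satSet_insert.mpr ⟨hc.satCC hI.1 hI.2.1, hI.2.2⟩⟩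
  | li M Γ Δ π E E' x x' _ hc =>
    rw [satSet_insert] at hI
    exact ⟨I, satSet_insert.mpr ⟨hc.satCC hI.1, hI.2⟩⟩
  | ref M c x t _ hc =>
    rw [satSet_insert, satSet_insert] at hI
    exact ⟨I, satSet_insert.mpr ⟨hc.satCC hI.1 hI.2.1, hI.2.2⟩⟩

end SDCPaper
end
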